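/- For any Hermitian n×n matrix A and integer n ≥ 2, the quantity -9/8·Σ_i |a_{ni}|² + 7/8·|a_{nn}|² - 1/2·(tr A)·a_{nn} + 9/16·Σ_{i,j}|a_{ij}|² + ((16(n-1)+27)/(80(n-1)+144))·(tr A)² is nonnegative. -/

import Mathlib

/-!
Write `m = n - 1`, `d = a_nn`, `t = tr A`, `R = Σ_i |a_ni|²`, `q = Σ_{i<n} a_ii²` and
`S = Σ_{i,j} |a_ij|²`. Since row `n`, column `n` (without `a_nn`) and the other diagonal entries
are disjoint sets of entries and `|a_in| = |a_ni|`, we get `S ≥ 2R - d² + q`; Cauchy–Schwarz on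
the other diagonal entries gives `(t - d)² ≤ m q`. Multiplied by `m (80m + 144)`, the expression
is a perfect square plus nonnegative multiples of these two gaps.
-/

open Finset

lemma nonneg_of_frobenius_bound_of_trace_bound {m R S d t q : ℝ} (hm : 0 < m)
    (hS : 2 * R - d ^ 2 + q ≤ S) (hq : (t - d) ^ 2 ≤ m * q) :
    0 ≤ -9/8 * R + 7/8 * d ^ 2 - 1/2 * t * d + 9/16 * S
        + (16 * m + 27) / (80 * m + 144) * t ^ 2 := by
  have hden : 0 < 80 * m + 144 := by linarith
  have hc : (16 * m + 27) / (80 * m + 144) * (80 * m + 144) = 16 * m + 27 :=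
    div_mul_cancel₀ _ hden.ne'
  have key : m * (80 * m + 144) * (-9/8 * R + 7/8 * d ^ 2 - 1/2 * t * d + 9/16 * S
        + (16 * m + 27) / (80 * m + 144) * t ^ 2)
      = (m * d - (4 * m + 9) * (t - d)) ^ 2
        + 9/16 * (80 * m + 144) * (m * q - (t - d) ^ 2)
        + 9/16 * (m * (80 * m + 144)) * (S - (2 * R - d ^ 2 + q)) := by
    linear_combination (m * t ^ 2) * hc
  refine nonneg_of_mul_nonneg_right (a := m * (80 * m + 144)) ?_ (by positivity)
  rw [key]
  have := sq_nonneg (m * d - (4 * m + 9) * (t - d))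
  have := mul_nonneg hden.le (sub_nonneg.2 hq)
  have := mul_nonneg (mul_pos hm hden).le (sub_nonneg.2 hS)
  linarith

namespace Matrix

variable {ι : Type*}

lemma sum_row_add_sum_col_add_sum_diag_le_sum_norm_sq {α : Type*} [Norm α]
    [Fintype ι] [DecidableEq ι] (A : Matrix ι ι α) (k : ι) :
    ∑ j, ‖A k j‖ ^ 2 + ∑ i ∈ univ.erase k, ‖A i k‖ ^ 2 + ∑ i ∈ univ.erase k, ‖A i i‖ ^ 2
      ≤ ∑ i, ∑ j, ‖A i j‖ ^ 2 := by
  rw [← add_sum_erase _ (fun i ↦ ∑ j, ‖A i j‖ ^ 2) (mem_univ k), add_assoc,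
    ← sum_add_distrib]
  gcongr with i hi
  rw [← sum_pair (f := fun j ↦ ‖A i j‖ ^ 2) (ne_of_mem_erase hi).symm]
  exact sum_le_sum_of_subset_of_nonneg (subset_univ _) fun j _ _ ↦ by positivity

section RCLike

variable {𝕜 : Type*} [RCLike 𝕜] {A : Matrix ι ι 𝕜}

lemma IsHermitian.norm_apply_comm (hA : A.IsHermitian) (i j : ι) : ‖A i j‖ = ‖A j i‖ := by
  rw [← hA.apply i j, norm_star]

lemma IsHermitian.norm_apply_self (hA : A.IsHermitian) (i : ι) :
    ‖A i i‖ = |RCLike.re (A i i)| := by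
  rw [← hA.coe_re_apply_self i, RCLike.norm_ofReal, RCLike.ofReal_re]

variable [Fintype ι] [DecidableEq ι]

lemma IsHermitian.two_mul_sum_row_add_sum_diag_le_sum_norm_sq (hA : A.IsHermitian) (k : ι) :
    2 * ∑ j, ‖A k j‖ ^ 2 - RCLike.re (A k k) ^ 2 + ∑ i ∈ univ.erase k, RCLike.re (A i i) ^ 2
      ≤ ∑ i, ∑ j, ‖A i j‖ ^ 2 := by
  have hcol :
      ∑ i ∈ univ.erase k, ‖A i k‖ ^ 2 = ∑ j, ‖A k j‖ ^ 2 - RCLike.re (A k k) ^ 2 := by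
    rw [← add_sum_erase _ _ (mem_univ k), hA.norm_apply_self, sq_abs]
    simp_rw [hA.norm_apply_comm _ k]
    ring
  have hdiag := sum_row_add_sum_col_add_sum_diag_le_sum_norm_sq A k
  simp_rw [hA.norm_apply_self, sq_abs, hcol] at hdiag
  linarith

theorem IsHermitian.expr_nonneg (hA : A.IsHermitian) (k : ι) (hι : 1 < Fintype.card ι) :
    0 ≤ -9/8 * (∑ j, ‖A k j‖ ^ 2) + 7/8 * ‖A k k‖ ^ 2
        - 1/2 * (∑ i, RCLike.re (A i i)) * RCLike.re (A k k)
        + 9/16 * (∑ i, ∑ j, ‖A i j‖ ^ 2)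
        + ((16 * ((Fintype.card ι : ℝ) - 1) + 27) / (80 * ((Fintype.card ι : ℝ) - 1) + 144))
          * (∑ i, RCLike.re (A i i)) ^ 2 := by
  have hcard : (#(univ.erase k) : ℝ) = Fintype.card ι - 1 := by
    rw [card_erase_of_mem (mem_univ k), card_univ, Nat.cast_pred (by omega)]
  have htrace : ∑ i, RCLike.re (A i i) - RCLike.re (A k k)
      = ∑ i ∈ univ.erase k, RCLike.re (A i i) := by
    rw [← add_sum_erase _ _ (mem_univ k)]; ring
  rw [hA.norm_apply_self, sq_abs]
  apply nonneg_of_frobenius_bound_of_trace_bound (sub_pos.2 (by exact_mod_cast hι))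
    (hA.two_mul_sum_row_add_sum_diag_le_sum_norm_sq k)
  rw [htrace, ← hcard]
  exact sq_sum_le_card_mul_sum_sq

end RCLike

end Matrix

theorem hermitian_expr_nonneg (n : ℕ) (hn : 2 ≤ n)
    (A : Matrix (Fin n) (Fin n) ℂ) (hA : A.IsHermitian) :
    let ln : Fin n := ⟨n - 1, by omega⟩
    0 ≤ -9/8 * (∑ i, ‖A ln i‖ ^ 2) + 7/8 * ‖A ln ln‖ ^ 2
        - 1/2 * (∑ i, (A i i).re) * (A ln ln).re
        + 9/16 * (∑ i, ∑ j, ‖A i j‖ ^ 2)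
        + ((16 * ((n : ℝ) - 1) + 27) / (80 * ((n : ℝ) - 1) + 144))
          * (∑ i, (A i i).re) ^ 2 := by
  simpa using hA.expr_nonneg ⟨n - 1, by omega⟩ (by rw [Fintype.card_fin]; omega)
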